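/- The sorted ℓ1 penalty with β_{s+1} > β_s satisfies condition (R2): with R(z) = Σ_{j=1}^N β_j |z|_[j], 0 ≤ β_1 ≤ … ≤ β_N, and β_{s+1} > β_s, for all z_1, …, z_{s+1} > 0 one has R(z_1,…,z_s,z_{s+1},0,…,0) > R(z_1,…,z_{s-1}, z_s + z_{s+1}, 0,…,0). -/

import Mathlib

/-!
With `β` monotone, the rearrangement inequality makes `R z` the minimum of
`∑ j, β j * |z (τ j)|` over all permutations `τ`. Arrange `v₁` decreasingly as `a`; the two
merged entries sit at ranks `m < M ≤ s`. Putting their sum at rank `m`, moving `a s` up to rank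
`M` and the new zero down to rank `s` changes the weighted sum by
`-a M * (β M - β m) - a s * (β s - β M) ≤ -a s * (β s - β m) < 0`.
-/

open Finset Function Equiv

section Merge

variable {ι R : Type*} [DecidableEq ι]

def mergeInto [Add R] [Zero R] (v : ι → R) (i k : ι) : ι → R :=
  update (update v i (v i + v k)) k 0

theorem mergeInto_comp_equiv [Add R] [Zero R] (v : ι → R) (i k : ι) (σ : Perm ι) :
    mergeInto v i k ∘ σ = mergeInto (v ∘ σ) (σ.symm i) (σ.symm k) := by
  simp [mergeInto, update_comp_equiv]

theorem mergeInto_comp_swap [AddCommMagma R] [Zero R] (v : ι → R) (i k : ι) :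
    mergeInto v i k ∘ swap i k = mergeInto v k i := by
  funext j
  simp only [mergeInto, comp_apply, update_apply, swap_apply_def]
  split_ifs <;> first | rfl | (subst_vars; simp_all [add_comm])

end Merge

section WeightedSum

variable {ι R : Type*} [Fintype ι] [DecidableEq ι] [CommRing R]

theorem sum_mul_mergeInto (c v : ι → R) {i k : ι} (hik : i ≠ k) :
    ∑ j, c j * mergeInto v i k j = ∑ j, c j * v j + (c i - c k) * v k := by
  have hdiff : ∑ j, (c j * mergeInto v i k j - c j * v j) = (c i - c k) * v k := by
    rw [Fintype.sum_eq_add i k hik]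
    · simp only [mergeInto, ne_eq, hik, not_false_eq_true, update_of_ne, update_self, mul_zero,
        zero_sub]
      ring
    · rintro j ⟨hji, hjk⟩
      simp [mergeInto, hji, hjk]
  rw [← hdiff, sum_sub_distrib]; ring

theorem sum_mul_comp_swap (c v : ι → R) (x y : ι) :
    ∑ j, c j * v (swap x y j) = ∑ j, c j * v j + (c x - c y) * (v y - v x) := by
  rcases eq_or_ne x y with rfl | hxy
  · simp
  have hdiff : ∑ j, (c j * v (swap x y j) - c j * v j) = (c x - c y) * (v y - v x) := by
    rw [Fintype.sum_eq_add x y hxy]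
    · simp only [swap_apply_left, swap_apply_right]
      ring
    · rintro j ⟨hjx, hjy⟩
      simp [swap_apply_of_ne_of_ne hjx hjy]
  rw [← hdiff, sum_sub_distrib]; ring

end WeightedSum

theorem exists_perm_sum_mul_mergeInto_lt {ι : Type*} [Fintype ι] [LinearOrder ι] {β a : ι → ℝ}
    (hβ : Monotone β) (ha : Antitone a) {i k s : ι} (hik : i ≠ k) (his : i ≤ s) (hks : k ≤ s)
    (hβs : ∀ j < s, β j < β s) (has : 0 < a s) :
    ∃ τ : Perm ι, ∑ j, β j * mergeInto a i k (τ j) < ∑ j, β j * a j := by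
  wlog hlt : i < k generalizing i k
  · obtain ⟨τ, hτ⟩ := this hik.symm hks his (lt_of_le_of_ne (not_lt.1 hlt) hik.symm)
    refine ⟨swap i k * τ, ?_⟩
    simpa [← mergeInto_comp_swap a i k] using hτ
  -- Merge `k` into `i`, then move the resulting zero to position `s` and `a s` up to `k`.
  refine ⟨swap k s, ?_⟩
  have hcorr : (β k - β s) * (mergeInto a i k s - mergeInto a i k k) = (β k - β s) * a s := by
    rcases eq_or_ne k s with rfl | hk
    · simp
    simp [mergeInto, hk.symm, (hlt.trans_le hks).ne']
  rw [sum_mul_comp_swap, hcorr, sum_mul_mergeInto _ _ hik]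
  have has_le : a s ≤ a k := ha hks
  have hβik : β i ≤ β k := hβ hlt.le
  have hβks : β k ≤ β s := hβ hks
  have hβis : β i < β s := hβs i (hlt.trans_le hks)
  nlinarith

theorem exists_perm_antitone_comp {α : Type*} [LinearOrder α] {n : ℕ} (f : Fin n → α) :
    ∃ σ : Perm (Fin n), Antitone (f ∘ σ) :=
  ⟨Tuple.sort (OrderDual.toDual ∘ f), Tuple.monotone_sort (OrderDual.toDual ∘ f)⟩

theorem Antitone.lt_apply_iff_lt_card {α : Type*} [Preorder α] [DecidableLT α] {n : ℕ}
    {a : Fin n → α} (ha : Antitone a) (b : α) (j : Fin n) : b < a j ↔ (j : ℕ) < #{i | b < a i} := by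
  constructor
  · intro hj
    have hsub : Iic j ⊆ ({i | b < a i} : Finset (Fin n)) := fun i hi => by
      simp only [mem_Iic, mem_filter, mem_univ, true_and] at hi ⊢
      exact hj.trans_le (ha hi)
    have := card_le_card hsub
    rw [Fin.card_Iic] at this
    omega
  · intro hj
    by_contra hbj
    have hsub : ({i | b < a i} : Finset (Fin n)) ⊆ Iio j := fun i hi => by
      simp only [mem_Iio, mem_filter, mem_univ, true_and] at hi ⊢
      by_contra hji
      exact hbj (hi.trans_le (ha (not_lt.1 hji)))
    have := card_le_card hsub
    rw [Fin.card_Iio] at this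
    omega

section SortedL1

variable {n : ℕ} {β : Fin n → ℝ} {R : (Fin n → ℝ) → ℝ}

def IsSortedL1 (β : Fin n → ℝ) (R : (Fin n → ℝ) → ℝ) : Prop :=
  ∀ z : Fin n → ℝ, ∀ σ : Perm (Fin n),
    Antitone (fun j => |z (σ j)|) → R z = ∑ j, β j * |z (σ j)|

theorem IsSortedL1.le_sum_mul_abs_comp_perm (hR : IsSortedL1 β R) (hβ : Monotone β)
    (z : Fin n → ℝ) (τ : Perm (Fin n)) : R z ≤ ∑ j, β j * |z (τ j)| := by
  obtain ⟨σ, hσ⟩ := exists_perm_antitone_comp fun i => |z i|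
  rw [hR z σ hσ]
  simpa using (hβ.antivary hσ).sum_mul_le_sum_mul_comp_perm (σ := σ.symm * τ)

theorem IsSortedL1.mergeInto_lt (hR : IsSortedL1 β R) (hβ : Monotone β)
    {v : Fin n → ℝ} (hv : 0 ≤ v) {p q s : Fin n} (hpq : p ≠ q) (hp : 0 < v p) (hq : 0 < v q)
    (hcard : #{i | 0 < v i} = s + 1) (hβs : ∀ j < s, β j < β s) :
    R (mergeInto v p q) < R v := by
  obtain ⟨σ, hσ⟩ := exists_perm_antitone_comp v
  have hsorted_pos : ∀ j, 0 < v (σ j) ↔ (j : ℕ) < s + 1 := fun j => by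
    rw [← hcard, ← card_equiv σ (s := {i | 0 < v (σ i)}) (by simp)]
    exact hσ.lt_apply_iff_lt_card 0 j
  have hrank : ∀ i, 0 < v i → σ.symm i ≤ s := fun i hi =>
    Nat.lt_succ_iff.mp <| (hsorted_pos (σ.symm i)).1 (by simpa using hi)
  obtain ⟨τ, hτ⟩ := exists_perm_sum_mul_mergeInto_lt hβ hσ (σ.symm.injective.ne hpq)
    (hrank p hp) (hrank q hq) hβs ((hsorted_pos s).2 (Nat.lt_succ_self _))
  have hmerged_nonneg : 0 ≤ mergeInto v p q := fun i => by
    simp only [mergeInto, update_apply]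
    split_ifs
    exacts [le_rfl, add_nonneg (hv p) (hv q), hv i]
  calc R (mergeInto v p q) ≤ ∑ j, β j * |mergeInto v p q ((σ * τ) j)| :=
        hR.le_sum_mul_abs_comp_perm hβ _ (σ * τ)
    _ = ∑ j, β j * mergeInto (v ∘ σ) (σ.symm p) (σ.symm q) (τ j) := by
      simp only [Perm.mul_apply, abs_of_nonneg (hmerged_nonneg _), ← mergeInto_comp_equiv]
      rfl
    _ < ∑ j, β j * (v ∘ σ) j := hτ
    _ = R v := by
      rw [hR v σ (by simp only [abs_of_nonneg (hv _)]; exact hσ)]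
      simp only [abs_of_nonneg (hv _), comp_apply]

end SortedL1

/-- The sorted `ℓ1` penalty with `β_{s+1} > β_s` satisfies condition (R2):
with `R z = ∑ j, β j * |z|_[j]` (weights `0 ≤ β 0 ≤ … ≤ β (N-1)` paired with
the magnitudes of `z` in decreasing order) and `β` strictly increasing from
position `s` to `s+1` (1-based), for positive `z 0, …, z s`,
`R (z 0,…,z (s-1), z s, 0,…,0) > R (z 0,…,z (s-2), z (s-1) + z s, 0,…,0)`. -/
theorem sortedL1_satisfies_R2 (N s : ℕ) (hN : s + 1 ≤ N)
    (β : Fin N → ℝ) (hβmono : Monotone β)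
    (hβs : β ⟨s - 1, by omega⟩ < β ⟨s, by omega⟩)
    (R : (Fin N → ℝ) → ℝ)
    (hR : ∀ z : Fin N → ℝ, ∀ σ : Equiv.Perm (Fin N),
      Antitone (fun j => |z (σ j)|) → R z = ∑ j, β j * |z (σ j)|)
    (z : Fin (s + 1) → ℝ) (hz : ∀ i, 0 < z i)
    (v₁ v₂ : Fin N → ℝ)
    (hv₁ : v₁ = fun (j : Fin N) => if h : (j : ℕ) < s + 1 then z ⟨j, h⟩ else 0)
    (hv₂ : v₂ = fun (j : Fin N) =>
      if h : (j : ℕ) < s - 1 then z ⟨j, by omega⟩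
      else if (j : ℕ) = s - 1 then z ⟨s - 1, by omega⟩ + z ⟨s, by omega⟩
      else 0) :
    R v₂ < R v₁ := by
  set p : Fin N := ⟨s - 1, by omega⟩
  set q : Fin N := ⟨s, by omega⟩
  have hpq : p ≠ q := fun h => hβs.ne (congrArg β h)
  have hv₁pos : ∀ i, 0 < v₁ i ↔ (i : ℕ) < s + 1 := fun i => by
    subst hv₁
    by_cases hi : (i : ℕ) < s + 1 <;> simp [hi, hz]
  have hv₁nonneg : 0 ≤ v₁ := fun i => by
    subst hv₁
    by_cases hi : (i : ℕ) < s + 1 <;> simp [hi, (hz _).le]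
  have hcard : #{i | 0 < v₁ i} = q + 1 := by
    simp only [hv₁pos, Fin.card_filter_val_lt, q]
    omega
  have hmerge : v₂ = mergeInto v₁ p q := by
    have hpq' : (p : ℕ) ≠ q := fun h => hpq (Fin.ext h)
    funext j
    subst hv₁ hv₂
    simp only [mergeInto, update_apply, Fin.ext_iff, p, q] at hpq' ⊢
    split_ifs <;> first | rfl | omega
  have hβjump : ∀ j < q, β j < β q := fun j hj =>
    (hβmono (Fin.le_def.2 (by simp only [Fin.lt_def, p, q] at hj ⊢; omega))).trans_lt hβs
  rw [hmerge]
  exact IsSortedL1.mergeInto_lt hR hβmono hv₁nonneg hpq ((hv₁pos p).2 (by simp only [p]; omega))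
    ((hv₁pos q).2 (by simp [q])) hcard hβjump
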